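/- arXiv:2603.02157 — 2 statements merged into one kernel-verified Lean document; each statement's English description precedes it below -/
import Mathlib

section
/- Relative expansion version: under the same setup, suppose instead each ∂_{G[i],1} satisfies the relative expansion bound |∂_{G[i],1}(v_i)| ≥ min(d, |S(v_i) ∩ P_i|, |P_i \ S(v_i)|), where S(v_i) is the support of v_i and P_i ⊆ indices of G[i]_1 is the set of indices mapped bijectively onto the support of c_i by g[i]_1 (so |g[i]_1(v_i)| = |S(v_i) ∩ P_i| and |c_i| − |g[i]_1(v_i)| = |P_i \ S(v_i)|). If every nonzero element of ker(∂_C) has Hamming weight ≥ d, then again |c_j + ∑_i g[i]_1(v_i)| + ∑_i |∂_{G[i],1}(v_i)| ≥ d for all unmeasured representatives c_j and all (v_1,…,v_t), hence d_1(cone(ḡ)) ≥ d. -/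
/-!
If some `|∂_{G[i],1}(v_i)|` is already at least `d` there is nothing to prove. Otherwise the
relative expansion bound gives, for every `i`, a choice `e_i ∈ {0, 1}` with
`|e_i c_i + g[i]₁(v_i)| ≤ |∂_{G[i],1}(v_i)|`. The cycle `c_j + ∑ e_i c_i` is nonzero because `c_j`
is independent of the `c_i`, so it has weight at least `d`; in characteristic two it equals
`(c_j + ∑ g[i]₁(v_i)) + ∑ (e_i c_i + g[i]₁(v_i))`, and the triangle inequality for the Hamming
weight finishes the proof.
-/

open Matrix

/-- The support of a vector over `𝔽₂`, as a `Finset`. -/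
def suppF {n : ℕ} (v : Fin n → ZMod 2) : Finset (Fin n) := {j | v j ≠ 0}

section Hamming

variable {ι κ : Type*} [Fintype ι] {β : ι → Type*} [∀ i, DecidableEq (β i)]

theorem hammingNorm_add_le [∀ i, AddGroup (β i)] (x y : ∀ i, β i) :
    hammingNorm (x + y) ≤ hammingNorm x + hammingNorm y := by
  have h := hammingDist_triangle 0 x (x + y)
  rwa [hammingDist_zero_left, hammingDist_eq_hammingNorm, neg_add_cancel_left] at h

theorem hammingNorm_sum_le [∀ i, AddCommGroup (β i)] (s : Finset κ) (f : κ → ∀ i, β i) :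
    hammingNorm (∑ k ∈ s, f k) ≤ ∑ k ∈ s, hammingNorm (f k) :=
  Finset.le_sum_of_subadditive _ hammingNorm_zero.le hammingNorm_add_le s f

theorem hammingNorm_add_sum_le [∀ i, AddCommGroup (β i)] (s : Finset κ) (a : ∀ i, β i)
    (y w : κ → ∀ i, β i) :
    hammingNorm (a + ∑ k ∈ s, y k)
      ≤ hammingNorm (a + ∑ k ∈ s, w k) + ∑ k ∈ s, hammingNorm (y k - w k) := by
  have hdecomp : a + ∑ k ∈ s, y k = (a + ∑ k ∈ s, w k) + ∑ k ∈ s, (y k - w k) := by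
    rw [Finset.sum_sub_distrib]
    abel
  rw [hdecomp]
  exact (hammingNorm_add_le _ _).trans (Nat.add_le_add_left (hammingNorm_sum_le _ _) _)

end Hamming

section Code

variable {K ι κ : Type*} [Ring K] [DecidableEq K] [Fintype ι]

theorem exists_hammingNorm_smul_add_eq_min (c w : ι → K) :
    ∃ e : K, hammingNorm (e • c + w) = min (hammingNorm w) (hammingNorm (c + w)) := by
  rcases min_choice (hammingNorm w) (hammingNorm (c + w)) with h | h
  · exact ⟨0, by rw [h, zero_smul, zero_add]⟩
  · exact ⟨1, by rw [h, one_smul]⟩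

theorem le_hammingNorm_add_of_notMem_span {C : Submodule K (ι → K)} {d : ℕ}
    (hC : ∀ x ∈ C, x ≠ 0 → d ≤ hammingNorm x) {c : κ → ι → K} (hc : ∀ k, c k ∈ C)
    {a : ι → K} (ha : a ∈ C) (ha' : a ∉ Submodule.span K (Set.range c))
    {y : ι → K} (hy : y ∈ Submodule.span K (Set.range c)) :
    d ≤ hammingNorm (a + y) := by
  have hyC : y ∈ C := Submodule.span_le.mpr (Set.range_subset_iff.mpr hc) hy
  refine hC _ (C.add_mem ha hyC) fun h => ha' ?_
  rw [eq_neg_of_add_eq_zero_left h]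
  exact neg_mem hy

theorem le_hammingNorm_add_sum_add_sum [CharP K 2] [Fintype κ] {C : Submodule K (ι → K)}
    {d : ℕ} (hC : ∀ x ∈ C, x ≠ 0 → d ≤ hammingNorm x) {c : κ → ι → K} (hc : ∀ k, c k ∈ C)
    {a : ι → K} (ha : a ∈ C) (ha' : a ∉ Submodule.span K (Set.range c))
    (w : κ → ι → K) (D : κ → ℕ)
    (hD : ∀ k, min d (min (hammingNorm (w k)) (hammingNorm (c k + w k))) ≤ D k) :
    d ≤ hammingNorm (a + ∑ k, w k) + ∑ k, D k := by
  by_cases hlarge : ∃ k, d ≤ D k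
  · obtain ⟨k, hk⟩ := hlarge
    exact hk.trans <| (Finset.single_le_sum (fun _ _ => Nat.zero_le _)
      (Finset.mem_univ k)).trans (Nat.le_add_left _ _)
  push Not at hlarge
  have hcoset : ∀ k, ∃ e : K, hammingNorm (e • c k + w k) ≤ D k := fun k => by
    obtain ⟨e, he⟩ := exists_hammingNorm_smul_add_eq_min (c k) (w k)
    have := hD k
    have := hlarge k
    exact ⟨e, by omega⟩
  choose e he using hcoset
  have hspan : ∑ k, e k • c k ∈ Submodule.span K (Set.range c) :=
    Submodule.sum_mem _ fun k _ => Submodule.smul_mem _ _ (Submodule.subset_span ⟨k, rfl⟩)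
  calc d ≤ hammingNorm (a + ∑ k, e k • c k) :=
        le_hammingNorm_add_of_notMem_span hC hc ha ha' hspan
    _ ≤ hammingNorm (a + ∑ k, w k) + ∑ k, hammingNorm (e k • c k - w k) :=
        hammingNorm_add_sum_le _ _ _ _
    _ ≤ hammingNorm (a + ∑ k, w k) + ∑ k, D k := by
        gcongr with k
        rw [show e k • c k - w k = e k • c k + w k from funext fun _ => CharTwo.sub_eq_add _ _]
        exact he k

end Code

/-- relative expansion version: with the same setup as the
Cheeger-constant version, suppose instead each `∂_{G[i],1}` satisfies the
relative expansion bound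
`|∂_{G[i],1}(v)| ≥ min(d, |S(v) ∩ P_i|, |P_i \ S(v)|)`,
where `P_i` is the index set of `G[i]₁` mapped bijectively onto the support of
`c_i` by `g[i]₁` (so that `|g[i]₁(v)| = |S(v) ∩ P_i|` and
`|c_i + g[i]₁(v)| = |P_i \ S(v)|`).  If every nonzero element of `ker ∂_C` has
Hamming weight `≥ d`, then for every unmeasured representative `c_j` and all
`(v_1,…,v_t)`, `|c_j + ∑_i g[i]₁(v_i)| + ∑_i |∂_{G[i],1}(v_i)| ≥ d`
(consequently, `d₁(cone(ḡ)) ≥ d`). -/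
theorem deformed_chain_weight_lower_bound_relative_expansion
    (t c1n c0n : ℕ) (d : ℕ)
    (g1n g0n : Fin t → ℕ)
    (dC : Matrix (Fin c0n) (Fin c1n) (ZMod 2))
    (dG1 : ∀ i, Matrix (Fin (g0n i)) (Fin (g1n i)) (ZMod 2))
    (gmap1 : ∀ i, Matrix (Fin c1n) (Fin (g1n i)) (ZMod 2))
    (c : Fin t → Fin c1n → ZMod 2)
    (P : ∀ i : Fin t, Finset (Fin (g1n i)))
    (hcker : ∀ i, dC.mulVecLin (c i) = 0)
    (hdistC : ∀ x : Fin c1n → ZMod 2, dC.mulVecLin x = 0 → x ≠ 0 → d ≤ hammingNorm x)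
    (hg1card : ∀ i (v : Fin (g1n i) → ZMod 2),
      hammingNorm ((gmap1 i).mulVecLin v) = (suppF v ∩ P i).card)
    (hgc : ∀ i (v : Fin (g1n i) → ZMod 2),
      hammingNorm (c i + (gmap1 i).mulVecLin v) = (P i \ suppF v).card)
    (hrelexp : ∀ i (v : Fin (g1n i) → ZMod 2),
      min d (min ((suppF v ∩ P i).card) ((P i \ suppF v).card))
        ≤ hammingNorm ((dG1 i).mulVecLin v))
    (cj : Fin c1n → ZMod 2)
    (hcjker : dC.mulVecLin cj = 0)
    (hcjindep : cj ∉ Submodule.span (ZMod 2) (Set.range c))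
    (v : ∀ i, Fin (g1n i) → ZMod 2) :
    d ≤ hammingNorm (cj + ∑ i, (gmap1 i).mulVecLin (v i))
        + ∑ i, hammingNorm ((dG1 i).mulVecLin (v i)) :=
  le_hammingNorm_add_sum_add_sum (C := LinearMap.ker dC.mulVecLin) hdistC hcker hcjker hcjindep
    _ _ fun i => by
      rw [hg1card, hgc]
      exact hrelexp i (v i)
end

section
/- Metacheck distance of the ancilla product complex: Let G[i] be a three-term complex with d^1(G[i]) = 1 and with empty 0-cohomology (so d^0(G[i]) = ∞ by convention), and let D be a two-term complex with d^0(D) = d and d^1(D) = 1. Then the 1-cosystolic distance of the product satisfies d^1(G[i]⊗D) = min(d^1(G[i])·d^0(D), d^0(G[i])·d^1(D)) = min(1·d, ∞·1) = d. -/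
open Matrix Kronecker

/-- The (co)systolic distance of a based `𝔽₂`-complex at the middle term of
`· --B--> · --A--> ·`, with convention `∞` for trivial (co)homology. -/
noncomputable def sysDist {ι κ τ : Type} [Fintype ι] [Fintype κ] [Fintype τ]
    (A : Matrix κ ι (ZMod 2)) (B : Matrix ι τ (ZMod 2)) : ℕ∞ :=
  sInf {w : ℕ∞ | ∃ x : ι → ZMod 2,
    A.mulVecLin x = 0 ∧ x ∉ LinearMap.range B.mulVecLin ∧ w = hammingNorm x}

/-!
A 1-cochain of `G ⊗ D` is a pair of matrices `(X, Y)` with rows indexed by `D₁`, resp. `D₀`, and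
columns by `G₀`, resp. `G₁`; over `𝔽₂` it is a cocycle iff `X ∂G₁ = ∂Dᵀ Y`, and a coboundary iff
`X = X' ∂G₀ + ∂Dᵀ Y'` and `Y = Y' ∂G₁`.

Upper bound: for a nonzero `D`-cocycle `a` and a `G`-cocycle `b` that is not a coboundary,
`(0, a bᵀ)` is a cocycle of weight `|a| |b|` that is not a coboundary; so `d¹(G ⊗ D) ≤ 1 · d`.

Lower bound: let `(X, Y)` be a cocycle of weight `< d`. Any functional on `H¹(G)` applied to the
rows of `Y` yields a `D`-cocycle supported on the nonzero rows of `Y`, hence of weight `< d`, hence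
zero. So the rows of `Y` are coboundaries, `Y = W ∂G₁`; then the rows of `X - ∂Dᵀ W` are
`G`-cocycles in degree `0`, hence coboundaries as `H⁰(G) = 0`, and `(X, Y)` is a coboundary.
So `d ≤ d¹(G ⊗ D)`.
-/

section HammingNorm

open Finset

variable {ι κ R : Type*} [Fintype ι] [Fintype κ] [DecidableEq R]

theorem hammingNorm_sumElim [Zero R] (f : ι → R) (g : κ → R) :
    hammingNorm (Sum.elim f g) = hammingNorm f + hammingNorm g := by
  rw [hammingNorm, ← card_toLeft_add_card_toRight]
  congr 2 <;> ext <;> simp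

theorem hammingNorm_le_hammingNorm_vec [Zero R] {X : Matrix ι κ R} {s : ι → R}
    (h : ∀ i, X i = 0 → s i = 0) : hammingNorm s ≤ hammingNorm (vec X) := by
  refine card_le_card_of_surjOn Prod.snd fun i hi => ?_
  obtain ⟨j, hj⟩ := Function.ne_iff.mp (mt (h i) (mem_filter.mp hi).2)
  exact ⟨(j, i), mem_filter.mpr ⟨mem_univ _, hj⟩, rfl⟩

theorem hammingNorm_vec_vecMulVec [MulZeroClass R] [NoZeroDivisors R] (a : ι → R) (b : κ → R) :
    hammingNorm (vec (vecMulVec a b)) = hammingNorm a * hammingNorm b := by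
  rw [hammingNorm, hammingNorm, hammingNorm, mul_comm, ← card_product]
  congr 1
  ext ⟨j, i⟩
  simp only [mem_filter, mem_product, mem_univ, true_and, vec, vecMulVec_apply, ne_eq,
    mul_eq_zero, not_or, and_comm]

end HammingNorm

section SysDist

variable {ι κ τ : Type} [Fintype ι] [Fintype κ] [Fintype τ]
  {A : Matrix κ ι (ZMod 2)} {B : Matrix ι τ (ZMod 2)}

theorem sysDist_le_hammingNorm {x : ι → ZMod 2} (hx : A.mulVecLin x = 0)
    (hx' : x ∉ LinearMap.range B.mulVecLin) : sysDist A B ≤ hammingNorm x :=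
  sInf_le ⟨x, hx, hx', rfl⟩

theorem le_sysDist {n : ℕ∞}
    (h : ∀ x, A.mulVecLin x = 0 → x ∉ LinearMap.range B.mulVecLin → n ≤ hammingNorm x) :
    n ≤ sysDist A B :=
  le_sInf fun _ ⟨x, hx, hx', hw⟩ => hw ▸ h x hx hx'

theorem mem_range_of_sysDist_eq_top (h : sysDist A B = ⊤) {x : ι → ZMod 2}
    (hx : A.mulVecLin x = 0) : x ∈ LinearMap.range B.mulVecLin := by
  by_contra hx'
  simpa [h] using sysDist_le_hammingNorm hx hx'

theorem exists_hammingNorm_eq_sysDist (h : sysDist A B ≠ ⊤) :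
    ∃ x, A.mulVecLin x = 0 ∧ x ∉ LinearMap.range B.mulVecLin ∧
      (hammingNorm x : ℕ∞) = sysDist A B := by
  unfold sysDist at h ⊢
  obtain ⟨x, hx, hx', hw⟩ := csInf_mem <| Set.nonempty_iff_ne_empty.mpr <|
    mt (fun hs => (congrArg sInf hs).trans sInf_empty) h
  exact ⟨x, hx, hx', hw.symm⟩

theorem sysDist_ne_zero : sysDist A B ≠ 0 := by
  refine (one_pos.trans_le (le_sysDist fun x _ hx => ?_)).ne'
  have hx0 : x ≠ 0 := by
    rintro rfl
    exact hx (Submodule.zero_mem _)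
  exact Nat.one_le_cast.mpr (hammingNorm_pos_iff.mpr hx0)

end SysDist

theorem Matrix.exists_mul_eq_of_forall_row_mem_range {ι κ μ K : Type*} [Fintype ι] [CommSemiring K]
    {A : Matrix ι κ K} {M : Matrix μ κ K} (h : ∀ i, M i ∈ LinearMap.range Aᵀ.mulVecLin) :
    ∃ W : Matrix μ ι K, W * A = M := by
  choose W hW using h
  refine ⟨Matrix.of W, ?_⟩
  ext i j
  rw [← hW i, mulVecLin_apply, mulVec_transpose]
  rfl

theorem Submodule.forall_mem_of_sum_smul_mem {κ γ K M : Type*} [Fintype κ] [Field K]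
    [AddCommGroup M] [Module K M] {V : Submodule K M} {f : κ → M} (B : Matrix κ γ K)
    (hf : ∀ j, ∑ m, B m j • f m ∈ V)
    (hB : ∀ s : κ → K, Bᵀ *ᵥ s = 0 → (∀ m, f m = 0 → s m = 0) → s = 0) (m : κ) : f m ∈ V := by
  by_contra hm
  obtain ⟨φ, hφm, hVφ⟩ := Submodule.exists_le_ker_of_notMem hm
  refine hφm (congrFun (hB (fun m => φ (f m)) ?_ fun m hm => by simp [hm]) m)
  ext j
  calc (Bᵀ *ᵥ fun m => φ (f m)) j = φ (∑ m, B m j • f m) := by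
        simp [mulVec, dotProduct, map_sum]
    _ = 0 := hVφ (hf j)

theorem Matrix.vecMulVec_ne_mul_of_notMem_range {K κ ι₁ ι₂ : Type*} [Field K] [Fintype ι₁]
    {dG : Matrix ι₁ ι₂ K} {a : κ → K} {b : ι₂ → K} (ha : a ≠ 0)
    (hb : b ∉ LinearMap.range dGᵀ.mulVecLin) (Y : Matrix κ ι₁ K) : vecMulVec a b ≠ Y * dG := by
  intro hab
  obtain ⟨m, hm⟩ := Function.ne_iff.mp ha
  have hrow : a m • b = dGᵀ.mulVecLin (Y m) := by
    rw [mulVecLin_apply, mulVec_transpose, ← mul_apply_eq_vecMul, ← hab]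
    rfl
  exact hb ((Submodule.smul_mem_iff _ hm).mp (hrow ▸ LinearMap.mem_range_self _ _))

/-- The boundary map `G₁ ⊗ D₁ ⊕ G₂ ⊗ D₀ → G₀ ⊗ D₁ ⊕ G₁ ⊗ D₀` of `G ⊗ D`, for boundary maps
`dG : G₁ → G₀`, `dG' : G₂ → G₁` and a two-term complex `dD : D₁ → D₀`. -/
def tensorBoundary {K ι₀ ι₁ ι₂ κ₀ κ₁ : Type*} [Semiring K] [DecidableEq ι₁] [DecidableEq κ₀]
    [DecidableEq κ₁] (dG : Matrix ι₀ ι₁ K) (dG' : Matrix ι₁ ι₂ K)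
    (dD : Matrix κ₀ κ₁ K) : Matrix ((ι₀ × κ₁) ⊕ (ι₁ × κ₀)) ((ι₁ × κ₁) ⊕ (ι₂ × κ₀)) K :=
  fromBlocks (dG ⊗ₖ 1) 0 (1 ⊗ₖ dD) (dG' ⊗ₖ 1)

section TensorProduct

variable {K ι₀ ι₁ ι₂ κ₀ κ₁ : Type*} [Fintype ι₀] [Fintype ι₁] [Fintype κ₀]
  [Fintype κ₁] [DecidableEq ι₁] [DecidableEq κ₀] [DecidableEq κ₁]

theorem exists_eq_sumElim_vec {R α β γ δ : Type*} (x : (α × β) ⊕ (γ × δ) → R) :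
    ∃ (X : Matrix β α R) (Y : Matrix δ γ R), x = Sum.elim (vec X) (vec Y) :=
  ⟨of fun j i => x (.inl (i, j)), of fun j i => x (.inr (i, j)), by ext (_ | _) <;> rfl⟩

theorem tensorBoundary_transpose_mulVec [CommSemiring K] (dG : Matrix ι₀ ι₁ K)
    (dG' : Matrix ι₁ ι₂ K) (dD : Matrix κ₀ κ₁ K) (X : Matrix κ₁ ι₀ K) (Y : Matrix κ₀ ι₁ K) :
    (tensorBoundary dG dG' dD)ᵀ *ᵥ Sum.elim (vec X) (vec Y) =
      Sum.elim (vec (X * dG + dDᵀ * Y)) (vec (Y * dG')) := by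
  simp only [tensorBoundary, fromBlocks_transpose, fromBlocks_mulVec, Sum.elim_comp_inl,
    Sum.elim_comp_inr, ← kroneckerMap_transpose, transpose_one, kronecker_mulVec_vec,
    transpose_transpose, Matrix.one_mul, Matrix.mul_one, transpose_zero, zero_mulVec, zero_add,
    vec_add]

theorem sumElim_vec_mem_range_tensorBoundary_transpose_iff [CommSemiring K]
    {dG : Matrix ι₀ ι₁ K} {dG' : Matrix ι₁ ι₂ K} {dD : Matrix κ₀ κ₁ K}
    {X : Matrix κ₁ ι₁ K} {Y : Matrix κ₀ ι₂ K} :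
    Sum.elim (vec X) (vec Y) ∈ LinearMap.range (tensorBoundary dG dG' dD)ᵀ.mulVecLin ↔
      ∃ (X' : Matrix κ₁ ι₀ K) (Y' : Matrix κ₀ ι₁ K), X = X' * dG + dDᵀ * Y' ∧ Y = Y' * dG' := by
  constructor
  · rintro ⟨y, hy⟩
    obtain ⟨X', Y', rfl⟩ := exists_eq_sumElim_vec y
    rw [mulVecLin_apply, tensorBoundary_transpose_mulVec] at hy
    exact ⟨X', Y', vec_inj.mp (congrArg (· ∘ Sum.inl) hy).symm,
      vec_inj.mp (congrArg (· ∘ Sum.inr) hy).symm⟩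
  · rintro ⟨X', Y', rfl, rfl⟩
    exact ⟨Sum.elim (vec X') (vec Y'), tensorBoundary_transpose_mulVec dG dG' dD X' Y'⟩

theorem tensorBoundary_zero_transpose_mulVec_eq_zero_iff [CommSemiring K]
    {dG : Matrix ι₀ ι₁ K} {dD : Matrix κ₀ κ₁ K}
    {X : Matrix κ₁ ι₀ K} {Y : Matrix κ₀ ι₁ K} :
    (tensorBoundary dG (0 : Matrix ι₁ ι₂ K) dD)ᵀ *ᵥ Sum.elim (vec X) (vec Y) = 0 ↔
      X * dG + dDᵀ * Y = 0 := by
  rw [tensorBoundary_transpose_mulVec, Matrix.mul_zero, vec_zero]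
  refine ⟨fun h => vec_inj.mp (congrArg (· ∘ Sum.inl) h), fun h => ?_⟩
  rw [h, vec_zero, Sum.elim_zero_zero]

end TensorProduct

theorem exists_tensor_coboundary_of_cocycle {K ι₀ ι₁ ι₂ κ₀ κ₁ : Type*} [Field K]
    [CharP K 2] [DecidableEq K] [Fintype ι₀] [Fintype ι₁] [Fintype ι₂] [Fintype κ₀]
    {dG : Matrix ι₀ ι₁ K} {dG' : Matrix ι₁ ι₂ K} {dD : Matrix κ₀ κ₁ K}
    (hG : ∀ v, dG'ᵀ *ᵥ v = 0 → v ∈ LinearMap.range dGᵀ.mulVecLin)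
    {X : Matrix κ₁ ι₁ K} {Y : Matrix κ₀ ι₂ K}
    (hD : ∀ s, dDᵀ *ᵥ s = 0 → hammingNorm s ≤ hammingNorm (vec Y) → s = 0)
    (hXY : X * dG' + dDᵀ * Y = 0) :
    ∃ (X' : Matrix κ₁ ι₀ K) (Y' : Matrix κ₀ ι₁ K), X = X' * dG + dDᵀ * Y' ∧ Y = Y' * dG' := by
  have hXY' : X * dG' = dDᵀ * Y := by
    ext i j
    exact CharTwo.add_eq_zero.mp (congr_fun₂ hXY i j)
  have hrows : ∀ m, Y m ∈ LinearMap.range dG'ᵀ.mulVecLin := by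
    refine Submodule.forall_mem_of_sum_smul_mem dD (fun j => ⟨X j, ?_⟩) fun s hs hsY => ?_
    · calc dG'ᵀ.mulVecLin (X j) = (X * dG') j := by
            rw [mulVecLin_apply, mulVec_transpose, mul_apply_eq_vecMul]
        _ = (dDᵀ * Y) j := by rw [hXY']
        _ = ∑ m, dD m j • Y m := by rw [mul_apply_eq_vecMul, vecMul_eq_sum]; rfl
    · exact hD s hs (hammingNorm_le_hammingNorm_vec hsY)
  obtain ⟨W, rfl⟩ := exists_mul_eq_of_forall_row_mem_range hrows
  have hcocycle : (X - dDᵀ * W) * dG' = 0 := by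
    rw [Matrix.sub_mul, Matrix.mul_assoc, hXY', sub_self]
  obtain ⟨X', hX'⟩ := exists_mul_eq_of_forall_row_mem_range fun j => hG _ <| by
    rw [mulVec_transpose, ← mul_apply_eq_vecMul, hcocycle]
    rfl
  exact ⟨X', W, eq_add_of_sub_eq hX'.symm, rfl⟩

section TensorProductDistance

variable {ι₀ ι₁ ι₂ ι₃ κ₀ κ₁ : Type} [Fintype ι₀] [Fintype ι₁] [Fintype ι₂] [Fintype ι₃]
  [Fintype κ₀] [Fintype κ₁] [DecidableEq ι₁] [DecidableEq ι₂] [DecidableEq κ₀] [DecidableEq κ₁]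
  {dG : Matrix ι₀ ι₁ (ZMod 2)} {dG' : Matrix ι₁ ι₂ (ZMod 2)} {dD : Matrix κ₀ κ₁ (ZMod 2)}

theorem sysDist_tensorBoundary_le_mul {σ τ : Type} [Fintype σ] [Fintype τ] :
    sysDist (tensorBoundary dG' (0 : Matrix ι₂ ι₃ (ZMod 2)) dD)ᵀ (tensorBoundary dG dG' dD)ᵀ ≤
      sysDist (0 : Matrix σ ι₂ (ZMod 2)) dG'ᵀ * sysDist dDᵀ (0 : Matrix κ₀ τ (ZMod 2)) := by
  by_cases hG : sysDist (0 : Matrix σ ι₂ (ZMod 2)) dG'ᵀ = ⊤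
  · rw [hG, ENat.top_mul sysDist_ne_zero]
    exact le_top
  by_cases hD : sysDist dDᵀ (0 : Matrix κ₀ τ (ZMod 2)) = ⊤
  · rw [hD, ENat.mul_top sysDist_ne_zero]
    exact le_top
  obtain ⟨b, -, hb, hbG⟩ := exists_hammingNorm_eq_sysDist hG
  obtain ⟨a, ha, ha0, haD⟩ := exists_hammingNorm_eq_sysDist hD
  replace ha0 : a ≠ 0 := by simpa [mulVecLin_zero] using ha0
  rw [← hbG, ← haD]
  calc _ ≤ (hammingNorm
        (Sum.elim (vec (0 : Matrix κ₁ ι₁ (ZMod 2))) (vec (vecMulVec a b))) : ℕ∞) := by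
        refine sysDist_le_hammingNorm ?_ ?_
        · rw [mulVecLin_apply, tensorBoundary_zero_transpose_mulVec_eq_zero_iff, Matrix.zero_mul,
            zero_add, mul_vecMulVec, ← mulVecLin_apply, ha, zero_vecMulVec]
        · rw [sumElim_vec_mem_range_tensorBoundary_transpose_iff]
          rintro ⟨-, Y, -, hY⟩
          exact vecMulVec_ne_mul_of_notMem_range ha0 hb Y hY
    _ = (hammingNorm b : ℕ∞) * hammingNorm a := by
      rw [hammingNorm_sumElim, vec_zero, hammingNorm_zero, zero_add, hammingNorm_vec_vecMulVec,
        Nat.cast_mul, mul_comm]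

theorem sysDist_le_sysDist_tensorBoundary {τ : Type} [Fintype τ] (hG : sysDist dG'ᵀ dGᵀ = ⊤) :
    sysDist dDᵀ (0 : Matrix κ₀ τ (ZMod 2)) ≤
      sysDist (tensorBoundary dG' (0 : Matrix ι₂ ι₃ (ZMod 2)) dD)ᵀ
        (tensorBoundary dG dG' dD)ᵀ := by
  refine le_sysDist fun x hx hx' => ?_
  obtain ⟨X, Y, rfl⟩ := exists_eq_sumElim_vec x
  rw [mulVecLin_apply, tensorBoundary_zero_transpose_mulVec_eq_zero_iff] at hx
  by_contra! hlt
  refine hx' (sumElim_vec_mem_range_tensorBoundary_transpose_iff.mpr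
    (exists_tensor_coboundary_of_cocycle (fun v hv => ?_) (fun s hs hsY => ?_) hx))
  · exact mem_range_of_sysDist_eq_top hG hv
  · by_contra hs0
    have hD := sysDist_le_hammingNorm (B := (0 : Matrix κ₀ τ (ZMod 2))) hs
      (by simpa [mulVecLin_zero] using hs0)
    have hsx : hammingNorm s ≤ hammingNorm (Sum.elim (vec X) (vec Y)) := by
      rw [hammingNorm_sumElim]
      omega
    exact hlt.not_ge (hD.trans (Nat.cast_le.mpr hsx))

end TensorProductDistance

theorem metacheck_distance_of_product_general
    (g1 g0 gm nD1 nD0 : ℕ) (d : ℕ)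
    (dG1 : Matrix (Fin g0) (Fin g1) (ZMod 2))
    (dG0 : Matrix (Fin gm) (Fin g0) (ZMod 2))
    (dD : Matrix (Fin nD0) (Fin nD1) (ZMod 2))
    -- d¹(G) = 1
    (hcd1G : sysDist (0 : Matrix (Fin 0) (Fin g1) (ZMod 2)) dG1ᵀ = 1)
    -- d⁰(G) = ∞ (empty 0-cohomology)
    (hcd0G : sysDist dG1ᵀ dG0ᵀ = ⊤)
    -- d⁰(D) = d
    (hcd0D : sysDist dDᵀ (0 : Matrix (Fin nD0) (Fin 0) (ZMod 2)) = (d : ℕ∞)) :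
    -- the product boundary maps ∂₁ and ∂₂ of G ⊗ D; d¹(G⊗D) = ker(∂₂ᵀ)/im(∂₁ᵀ)
    (let B1 : Matrix ((Fin gm × Fin nD1) ⊕ (Fin g0 × Fin nD0))
               ((Fin g0 × Fin nD1) ⊕ (Fin g1 × Fin nD0)) (ZMod 2) :=
        Matrix.fromBlocks (dG0 ⊗ₖ (1 : Matrix (Fin nD1) (Fin nD1) (ZMod 2))) 0
          ((1 : Matrix (Fin g0) (Fin g0) (ZMod 2)) ⊗ₖ dD)
          (dG1 ⊗ₖ (1 : Matrix (Fin nD0) (Fin nD0) (ZMod 2)))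
     let B2 : Matrix ((Fin g0 × Fin nD1) ⊕ (Fin g1 × Fin nD0))
               ((Fin g1 × Fin nD1) ⊕ (Fin 0 × Fin nD0)) (ZMod 2) :=
        Matrix.fromBlocks (dG1 ⊗ₖ (1 : Matrix (Fin nD1) (Fin nD1) (ZMod 2))) 0
          ((1 : Matrix (Fin g1) (Fin g1) (ZMod 2)) ⊗ₖ dD)
          ((0 : Matrix (Fin g1) (Fin 0) (ZMod 2)) ⊗ₖ (1 : Matrix (Fin nD0) (Fin nD0) (ZMod 2)))
     sysDist B2ᵀ B1ᵀ = (d : ℕ∞)) := by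
  show sysDist (tensorBoundary dG1 (0 : Matrix (Fin g1) (Fin 0) (ZMod 2)) dD)ᵀ
    (tensorBoundary dG0 dG1 dD)ᵀ = d
  refine le_antisymm ?_ (hcd0D ▸ sysDist_le_sysDist_tensorBoundary hcd0G)
  calc _ ≤ sysDist (0 : Matrix (Fin 0) (Fin g1) (ZMod 2)) dG1ᵀ *
        sysDist dDᵀ (0 : Matrix (Fin nD0) (Fin 0) (ZMod 2)) := sysDist_tensorBoundary_le_mul
    _ = d := by rw [hcd1G, hcd0D, one_mul]

/-- metacheck distance of the ancilla product complex: let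
`G = (G₁ --dG1--> G₀ --dG0--> G₋₁)` be a three-term complex with `d¹(G) = 1` and
empty 0-cohomology (`d⁰(G) = ∞`), and let `D = (D₁ --dD--> D₀)` be a two-term
complex with `d⁰(D) = d` and `d¹(D) = 1`.  Then the 1-cosystolic distance of the
product satisfies
`d¹(G⊗D) = min(d¹(G)·d⁰(D), d⁰(G)·d¹(D)) = min(1·d, ∞·1) = d`. -/
theorem metacheck_distance_of_product
    (g1 g0 gm nD1 nD0 : ℕ) (d : ℕ)
    (dG1 : Matrix (Fin g0) (Fin g1) (ZMod 2))
    (dG0 : Matrix (Fin gm) (Fin g0) (ZMod 2))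
    (hG : dG0 * dG1 = 0)
    (dD : Matrix (Fin nD0) (Fin nD1) (ZMod 2))
    -- d¹(G) = 1
    (hcd1G : sysDist (0 : Matrix (Fin 0) (Fin g1) (ZMod 2)) dG1ᵀ = 1)
    -- d⁰(G) = ∞ (empty 0-cohomology)
    (hcd0G : sysDist dG1ᵀ dG0ᵀ = ⊤)
    -- d⁰(D) = d
    (hcd0D : sysDist dDᵀ (0 : Matrix (Fin nD0) (Fin 0) (ZMod 2)) = (d : ℕ∞))
    -- d¹(D) = 1
    (hcd1D : sysDist (0 : Matrix (Fin 0) (Fin nD1) (ZMod 2)) dDᵀ = 1) :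
    -- the product boundary maps ∂₁ and ∂₂ of G ⊗ D; d¹(G⊗D) = ker(∂₂ᵀ)/im(∂₁ᵀ)
    (let B1 : Matrix ((Fin gm × Fin nD1) ⊕ (Fin g0 × Fin nD0))
               ((Fin g0 × Fin nD1) ⊕ (Fin g1 × Fin nD0)) (ZMod 2) :=
        Matrix.fromBlocks (dG0 ⊗ₖ (1 : Matrix (Fin nD1) (Fin nD1) (ZMod 2))) 0
          ((1 : Matrix (Fin g0) (Fin g0) (ZMod 2)) ⊗ₖ dD)
          (dG1 ⊗ₖ (1 : Matrix (Fin nD0) (Fin nD0) (ZMod 2)))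
     let B2 : Matrix ((Fin g0 × Fin nD1) ⊕ (Fin g1 × Fin nD0))
               ((Fin g1 × Fin nD1) ⊕ (Fin 0 × Fin nD0)) (ZMod 2) :=
        Matrix.fromBlocks (dG1 ⊗ₖ (1 : Matrix (Fin nD1) (Fin nD1) (ZMod 2))) 0
          ((1 : Matrix (Fin g1) (Fin g1) (ZMod 2)) ⊗ₖ dD)
          ((0 : Matrix (Fin g1) (Fin 0) (ZMod 2)) ⊗ₖ (1 : Matrix (Fin nD0) (Fin nD0) (ZMod 2)))
     sysDist B2ᵀ B1ᵀ = (d : ℕ∞)) :=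
  metacheck_distance_of_product_general g1 g0 gm nD1 nD0 d dG1 dG0 dD hcd1G hcd0G hcd0D
end
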